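/- Let w ∈ ℂ² ≅ ℝ⁴ have real coordinates w_j = α_j/β + 1/(m^j β), j = 1,...,4, with α_j ∈ ℤ and β, m positive integers, m ≥ 2. Let x₀ ∈ ℝ⁴ and x_k = x₀ + k w. Then, starting from any residues (r₁,r₂,r₃,r₄) of (⌊x_{0,1}⌋,...,⌊x_{0,4}⌋) mod m, there exists 0 ≤ n ≤ 4βm⁵ such that ⌊x_{n,j}⌋ ≡ 0 (mod m) for all j = 1,2,3,4. -/

import Mathlib

lemma step_aux (m β : ℕ) (hm : 2 ≤ m) (hβ : 0 < β)
    (α : Fin 4 → ℤ) (x0 : Fin 4 → ℝ) (x : ℕ → Fin 4 → ℝ)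
    (hx : ∀ (k : ℕ) (j : Fin 4),
      x k j = x0 j + (k : ℝ) * ((α j : ℝ) / (β : ℝ) + 1 / ((m : ℝ) ^ ((j : ℕ) + 1) * (β : ℝ))))
    (k t : ℕ) (j j' : Fin 4) (hj : (j' : ℕ) ≤ (j : ℕ)) :
    ⌊x (k + t * β * m ^ ((j : ℕ) + 1)) j'⌋
      = ⌊x k j'⌋ + ((t : ℤ) * α j' * (m : ℤ) ^ ((j : ℕ) + 1)
          + (t : ℤ) * (m : ℤ) ^ ((j : ℕ) - (j' : ℕ))) := by
  have hm0 : (m : ℝ) ≠ 0 := by positivity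
  have hβ0 : (β : ℝ) ≠ 0 := by positivity
  have hpow : (m : ℝ) ^ ((j : ℕ) + 1) = (m : ℝ) ^ ((j' : ℕ) + 1) * (m : ℝ) ^ ((j : ℕ) - (j' : ℕ)) := by
    rw [← pow_add]; congr 1; omega
  have key : x (k + t * β * m ^ ((j : ℕ) + 1)) j'
      = x k j' + (((t : ℤ) * α j' * (m : ℤ) ^ ((j : ℕ) + 1)
          + (t : ℤ) * (m : ℤ) ^ ((j : ℕ) - (j' : ℕ)) : ℤ) : ℝ) := by
    rw [hx, hx]
    push_cast
    rw [hpow]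
    field_simp
    ring
  rw [key, Int.floor_add_intCast]

lemma pick_aux (m : ℕ) (hm : 2 ≤ m) (a : ℤ) :
    ((-a) % (m : ℤ)).toNat < m ∧ (m : ℤ) ∣ a + (((-a) % (m : ℤ)).toNat : ℤ) := by
  have h0 : (0 : ℤ) < (m : ℤ) := by exact_mod_cast (by omega : 0 < m)
  have hnn : 0 ≤ (-a) % (m : ℤ) := Int.emod_nonneg _ h0.ne'
  have hlt : (-a) % (m : ℤ) < (m : ℤ) := Int.emod_lt_of_pos _ h0
  have hcast : ((((-a) % (m : ℤ)).toNat : ℤ)) = (-a) % (m : ℤ) := Int.toNat_of_nonneg hnn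
  constructor
  · have : ((((-a) % (m : ℤ)).toNat : ℤ)) < (m : ℤ) := by rw [hcast]; exact hlt
    exact_mod_cast this
  · rw [hcast]
    have h1 : ((-a) % (m : ℤ)) ≡ (-a) [ZMOD (m : ℤ)] := Int.emod_emod_of_dvd _ dvd_rfl
    have h2 : a + (-a) % (m : ℤ) ≡ a + (-a) [ZMOD (m : ℤ)] := Int.ModEq.add_left _ h1
    rw [add_neg_cancel] at h2
    exact Int.modEq_zero_iff_dvd.mp h2

/-- Pigeonhole/arithmetic step of the intersection principle: with
`w_j = α_j/β + 1/(m^j β)` (`α_j ∈ ℤ`, `β, m` positive integers, `m ≥ 2`) and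
`x_k = x₀ + k·w`, from any starting point there is `0 ≤ n ≤ 4βm⁵` such that
`⌊x_{n,j}⌋ ≡ 0 (mod m)` for all `j = 1,…,4`. -/
theorem stmt_6 (m β : ℕ) (hm : 2 ≤ m) (hβ : 0 < β)
    (α : Fin 4 → ℤ) (x0 : Fin 4 → ℝ) (x : ℕ → Fin 4 → ℝ)
    (hx : ∀ (k : ℕ) (j : Fin 4),
      x k j = x0 j + (k : ℝ) * ((α j : ℝ) / (β : ℝ) + 1 / ((m : ℝ) ^ ((j : ℕ) + 1) * (β : ℝ)))) :
    ∃ n : ℕ, n ≤ 4 * β * m ^ 5 ∧ ∀ j : Fin 4, ⌊x n j⌋ ≡ 0 [ZMOD (m : ℤ)] := by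
  have hdvd1 : ∀ (t : ℤ) (a : ℤ) (e : ℕ), e ≠ 0 → (m : ℤ) ∣ t * a * (m : ℤ) ^ e :=
    fun t a e he => Dvd.dvd.mul_left (dvd_pow_self _ he) _
  have hdvd2 : ∀ (t : ℤ) (e : ℕ), e ≠ 0 → (m : ℤ) ∣ t * (m : ℤ) ^ e :=
    fun t e he => Dvd.dvd.mul_left (dvd_pow_self _ he) _
  -- Stage 0 (coordinate 0)
  obtain ⟨ht0lt, ht0dvd⟩ := pick_aux m hm ⌊x 0 0⌋
  set t0 : ℕ := ((-⌊x 0 0⌋) % (m : ℤ)).toNat with ht0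
  set k1 : ℕ := 0 + t0 * β * m ^ (((0 : Fin 4) : ℕ) + 1) with hk1
  have e00 := step_aux m β hm hβ α x0 x hx 0 t0 0 0 (le_refl _)
  simp only [Nat.sub_self, pow_zero, mul_one] at e00
  have d10 : (m : ℤ) ∣ ⌊x k1 0⌋ := by
    rw [hk1, e00, show ⌊x 0 0⌋ + ((t0 : ℤ) * α 0 * (m : ℤ) ^ (((0 : Fin 4) : ℕ) + 1) + (t0 : ℤ))
      = (⌊x 0 0⌋ + (t0 : ℤ)) + (t0 : ℤ) * α 0 * (m : ℤ) ^ (((0 : Fin 4) : ℕ) + 1) from by ring]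
    exact dvd_add ht0dvd (hdvd1 _ _ _ (by decide))
  -- Stage 1 (coordinate 1)
  obtain ⟨ht1lt, ht1dvd⟩ := pick_aux m hm ⌊x k1 1⌋
  set t1 : ℕ := ((-⌊x k1 1⌋) % (m : ℤ)).toNat with ht1
  set k2 : ℕ := k1 + t1 * β * m ^ (((1 : Fin 4) : ℕ) + 1) with hk2
  have e10 := step_aux m β hm hβ α x0 x hx k1 t1 1 0 (by decide)
  have e11 := step_aux m β hm hβ α x0 x hx k1 t1 1 1 (le_refl _)
  simp only [Nat.sub_self, pow_zero, mul_one] at e11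
  have d20 : (m : ℤ) ∣ ⌊x k2 0⌋ := by
    rw [hk2, e10]
    exact dvd_add d10 (dvd_add (hdvd1 _ _ _ (by decide)) (hdvd2 _ _ (by decide)))
  have d21 : (m : ℤ) ∣ ⌊x k2 1⌋ := by
    rw [hk2, e11, show ⌊x k1 1⌋ + ((t1 : ℤ) * α 1 * (m : ℤ) ^ (((1 : Fin 4) : ℕ) + 1) + (t1 : ℤ))
      = (⌊x k1 1⌋ + (t1 : ℤ)) + (t1 : ℤ) * α 1 * (m : ℤ) ^ (((1 : Fin 4) : ℕ) + 1) from by ring]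
    exact dvd_add ht1dvd (hdvd1 _ _ _ (by decide))
  -- Stage 2 (coordinate 2)
  obtain ⟨ht2lt, ht2dvd⟩ := pick_aux m hm ⌊x k2 2⌋
  set t2 : ℕ := ((-⌊x k2 2⌋) % (m : ℤ)).toNat with ht2
  set k3 : ℕ := k2 + t2 * β * m ^ (((2 : Fin 4) : ℕ) + 1) with hk3
  have e20 := step_aux m β hm hβ α x0 x hx k2 t2 2 0 (by decide)
  have e21 := step_aux m β hm hβ α x0 x hx k2 t2 2 1 (by decide)
  have e22 := step_aux m β hm hβ α x0 x hx k2 t2 2 2 (le_refl _)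
  simp only [Nat.sub_self, pow_zero, mul_one] at e22
  have d30 : (m : ℤ) ∣ ⌊x k3 0⌋ := by
    rw [hk3, e20]
    exact dvd_add d20 (dvd_add (hdvd1 _ _ _ (by decide)) (hdvd2 _ _ (by decide)))
  have d31 : (m : ℤ) ∣ ⌊x k3 1⌋ := by
    rw [hk3, e21]
    exact dvd_add d21 (dvd_add (hdvd1 _ _ _ (by decide)) (hdvd2 _ _ (by decide)))
  have d32 : (m : ℤ) ∣ ⌊x k3 2⌋ := by
    rw [hk3, e22, show ⌊x k2 2⌋ + ((t2 : ℤ) * α 2 * (m : ℤ) ^ (((2 : Fin 4) : ℕ) + 1) + (t2 : ℤ))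
      = (⌊x k2 2⌋ + (t2 : ℤ)) + (t2 : ℤ) * α 2 * (m : ℤ) ^ (((2 : Fin 4) : ℕ) + 1) from by ring]
    exact dvd_add ht2dvd (hdvd1 _ _ _ (by decide))
  -- Stage 3 (coordinate 3)
  obtain ⟨ht3lt, ht3dvd⟩ := pick_aux m hm ⌊x k3 3⌋
  set t3 : ℕ := ((-⌊x k3 3⌋) % (m : ℤ)).toNat with ht3
  set k4 : ℕ := k3 + t3 * β * m ^ (((3 : Fin 4) : ℕ) + 1) with hk4
  have e30 := step_aux m β hm hβ α x0 x hx k3 t3 3 0 (by decide)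
  have e31 := step_aux m β hm hβ α x0 x hx k3 t3 3 1 (by decide)
  have e32 := step_aux m β hm hβ α x0 x hx k3 t3 3 2 (by decide)
  have e33 := step_aux m β hm hβ α x0 x hx k3 t3 3 3 (le_refl _)
  simp only [Nat.sub_self, pow_zero, mul_one] at e33
  have d40 : (m : ℤ) ∣ ⌊x k4 0⌋ := by
    rw [hk4, e30]
    exact dvd_add d30 (dvd_add (hdvd1 _ _ _ (by decide)) (hdvd2 _ _ (by decide)))
  have d41 : (m : ℤ) ∣ ⌊x k4 1⌋ := by
    rw [hk4, e31]
    exact dvd_add d31 (dvd_add (hdvd1 _ _ _ (by decide)) (hdvd2 _ _ (by decide)))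
  have d42 : (m : ℤ) ∣ ⌊x k4 2⌋ := by
    rw [hk4, e32]
    exact dvd_add d32 (dvd_add (hdvd1 _ _ _ (by decide)) (hdvd2 _ _ (by decide)))
  have d43 : (m : ℤ) ∣ ⌊x k4 3⌋ := by
    rw [hk4, e33, show ⌊x k3 3⌋ + ((t3 : ℤ) * α 3 * (m : ℤ) ^ (((3 : Fin 4) : ℕ) + 1) + (t3 : ℤ))
      = (⌊x k3 3⌋ + (t3 : ℤ)) + (t3 : ℤ) * α 3 * (m : ℤ) ^ (((3 : Fin 4) : ℕ) + 1) from by ring]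
    exact dvd_add ht3dvd (hdvd1 _ _ _ (by decide))
  -- the bound
  refine ⟨k4, ?_, ?_⟩
  · have hterm : ∀ (t i : ℕ), t < m → i + 1 ≤ 4 → t * β * m ^ (i + 1) < β * m ^ 5 := by
      intro t i ht hi
      have h1 : t * m ^ (i + 1) < m * m ^ (i + 1) :=
        (Nat.mul_lt_mul_right (Nat.pow_pos (by omega))).mpr ht
      have h2 : m * m ^ (i + 1) = m ^ (i + 2) := by ring
      have h3 : m ^ (i + 2) ≤ m ^ 5 := Nat.pow_le_pow_right (by omega) (by omega)
      calc t * β * m ^ (i + 1) = β * (t * m ^ (i + 1)) := by ring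
        _ < β * m ^ 5 := (Nat.mul_lt_mul_left hβ).mpr (by omega)
    have b0 : t0 * β * m ^ (((0 : Fin 4) : ℕ) + 1) < β * m ^ 5 := hterm t0 0 ht0lt (by omega)
    have b1 : t1 * β * m ^ (((1 : Fin 4) : ℕ) + 1) < β * m ^ 5 := hterm t1 1 ht1lt (by omega)
    have b2 : t2 * β * m ^ (((2 : Fin 4) : ℕ) + 1) < β * m ^ 5 := hterm t2 2 ht2lt (by omega)
    have b3 : t3 * β * m ^ (((3 : Fin 4) : ℕ) + 1) < β * m ^ 5 := hterm t3 3 ht3lt (by omega)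
    rw [hk4, hk3, hk2, hk1]
    have : 4 * β * m ^ 5 = β * m ^ 5 + β * m ^ 5 + β * m ^ 5 + β * m ^ 5 := by ring
    omega
  · intro j
    fin_cases j
    · exact Int.modEq_zero_iff_dvd.mpr d40
    · exact Int.modEq_zero_iff_dvd.mpr d41
    · exact Int.modEq_zero_iff_dvd.mpr d42
    · exact Int.modEq_zero_iff_dvd.mpr d43
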